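/- Behavior of fixed points as the noise vanishes (Lemma 7): assume ψ is continuous on (0,∞), β > 0 satisfies β·ψ(x) < x for every x > 0, and ψ(x)/x → 0 as x → 0⁺. Then for every ε > 0 there exists δ > 0 such that for every noise variance N₀ ∈ (0, δ) and every fixed point x > 0 satisfying x = N₀ + β·ψ(x), one has N₀ ≤ x ≤ (1+ε)·N₀. In particular, as N₀ → 0 the fixed-point solutions x of the LAMA state-evolution equation tend to 0 and satisfy x/N₀ → 1. -/

import Mathlib

open MeasureTheory Filter Topology

noncomputable def wC (O : Finset ℂ) (p : ℂ → ℝ) (z : ℂ) (τ : ℝ) (a : ℂ) : ℝ :=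
  p a * Real.exp (-(‖z - a‖) ^ 2 / τ) /
    ∑ a' ∈ O, p a' * Real.exp (-(‖z - a'‖) ^ 2 / τ)

noncomputable def Fc (O : Finset ℂ) (p : ℂ → ℝ) (z : ℂ) (τ : ℝ) : ℂ :=
  ∑ a ∈ O, (wC O p z τ a : ℂ) * a

noncomputable def Gc (O : Finset ℂ) (p : ℂ → ℝ) (z : ℂ) (τ : ℝ) : ℝ :=
  ∑ a ∈ O, wC O p z τ a * (‖a - Fc O p z τ‖) ^ 2

noncomputable def gaussC : Measure ℂ :=
  volume.withDensity fun z => ENNReal.ofReal ((1 / Real.pi) * Real.exp (-(‖z‖) ^ 2))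

noncomputable def PsiC (O : Finset ℂ) (p : ℂ → ℝ) (v g : ℝ) : ℝ :=
  ∑ a ∈ O, p a * ∫ z, (‖Fc O p (a + (Real.sqrt v : ℂ) * z) g - a‖) ^ 2 ∂gaussC

noncomputable def PhiC (O : Finset ℂ) (p : ℂ → ℝ) (v g : ℝ) : ℝ :=
  ∑ a ∈ O, p a * ∫ z, Gc O p (a + (Real.sqrt v : ℂ) * z) g ∂gaussC

lemma gauss_integrable' :
    Integrable (fun z : ℂ => (1 / Real.pi) * Real.exp (-(‖z‖) ^ 2)) := by
  apply Integrable.const_mul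
  have h1 : Integrable (fun x : ℝ => Real.exp (-1 * x ^ 2)) := integrable_exp_neg_mul_sq one_pos
  have h2 : Integrable (fun q : ℝ × ℝ => Real.exp (-1 * q.1 ^ 2) * Real.exp (-1 * q.2 ^ 2)) :=
    h1.mul_prod h1
  have hmp := Complex.volume_preserving_equiv_real_prod
  have := (hmp.integrable_comp_emb Complex.measurableEquivRealProd.measurableEmbedding).mpr h2
  apply this.congr
  filter_upwards with z
  simp only [Function.comp_apply, Complex.measurableEquivRealProd, Complex.equivRealProdLm,
    Homeomorph.toMeasurableEquiv_coe]
  rw [← Real.exp_add, Complex.sq_norm, Complex.normSq_apply]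
  ring_nf
  rfl

instance : IsFiniteMeasure gaussC := by
  constructor
  rw [gaussC, withDensity_apply _ MeasurableSet.univ, setLIntegral_univ]
  exact gauss_integrable'.lintegral_lt_top

section bounds

variable {O : Finset ℂ} {p : ℂ → ℝ}

lemma denom_pos (hO : O.Nonempty) (hp : ∀ a ∈ O, 0 < p a) (z : ℂ) (τ : ℝ) :
    0 < ∑ a' ∈ O, p a' * Real.exp (-(‖z - a'‖) ^ 2 / τ) :=
  Finset.sum_pos (fun a ha => mul_pos (hp a ha) (Real.exp_pos _)) hO

lemma wC_nonneg (hO : O.Nonempty) (hp : ∀ a ∈ O, 0 < p a) (z : ℂ) (τ : ℝ) {a : ℂ}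
    (ha : a ∈ O) : 0 ≤ wC O p z τ a :=
  div_nonneg (mul_nonneg (hp a ha).le (Real.exp_pos _).le) (denom_pos hO hp z τ).le

lemma wC_sum (hO : O.Nonempty) (hp : ∀ a ∈ O, 0 < p a) (z : ℂ) (τ : ℝ) :
    ∑ a ∈ O, wC O p z τ a = 1 := by
  simp only [wC]
  rw [← Finset.sum_div]
  exact div_self (denom_pos hO hp z τ).ne'

lemma Fc_norm_le (hO : O.Nonempty) (hp : ∀ a ∈ O, 0 < p a) (z : ℂ) (τ : ℝ)
    {R : ℝ} (hR : ∀ a ∈ O, ‖a‖ ≤ R) : ‖Fc O p z τ‖ ≤ R := by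
  rw [Fc]
  calc ‖∑ a ∈ O, (wC O p z τ a : ℂ) * a‖ ≤ ∑ a ∈ O, ‖(wC O p z τ a : ℂ) * a‖ :=
        norm_sum_le _ _
    _ ≤ ∑ a ∈ O, wC O p z τ a * R := by
        apply Finset.sum_le_sum
        intro a ha
        rw [norm_mul, Complex.norm_real, Real.norm_eq_abs,
          abs_of_nonneg (wC_nonneg hO hp z τ ha)]
        exact mul_le_mul_of_nonneg_left (hR a ha)
          (wC_nonneg hO hp z τ ha)
    _ = R := by rw [← Finset.sum_mul, wC_sum hO hp, one_mul]

lemma PsiC_nonneg (hp : ∀ a ∈ O, 0 < p a) (v g : ℝ) : 0 ≤ PsiC O p v g := by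
  apply Finset.sum_nonneg
  intro a ha
  apply mul_nonneg (hp a ha).le
  apply integral_nonneg
  intro z
  positivity

lemma PsiC_le (hO : O.Nonempty) (hp : ∀ a ∈ O, 0 < p a) (hpsum : ∑ a ∈ O, p a = 1)
    (v g : ℝ) :
    PsiC O p v g ≤ (2 * O.sup' hO (fun a => ‖a‖)) ^ 2 * (gaussC Set.univ).toReal := by
  set R := O.sup' hO (fun a => ‖a‖) with hRdef
  have hR : ∀ a ∈ O, ‖a‖ ≤ R := fun a ha => Finset.le_sup' _ ha
  have hR0 : 0 ≤ R := le_trans (norm_nonneg _) (hR hO.choose hO.choose_spec)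
  have key : ∀ a ∈ O,
      (∫ z, (‖Fc O p (a + (Real.sqrt v : ℂ) * z) g - a‖) ^ 2 ∂gaussC) ≤
        (2 * R) ^ 2 * (gaussC Set.univ).toReal := by
    intro a ha
    refine le_trans (le_abs_self _) ?_
    rw [← Real.norm_eq_abs]
    apply norm_integral_le_of_norm_le_const
    filter_upwards with z
    rw [Real.norm_eq_abs, abs_of_nonneg (by positivity)]
    have h1 : ‖Fc O p (a + (Real.sqrt v : ℂ) * z) g - a‖ ≤ 2 * R := by
      calc ‖Fc O p (a + (Real.sqrt v : ℂ) * z) g - a‖ ≤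
            ‖Fc O p (a + (Real.sqrt v : ℂ) * z) g‖ + ‖a‖ := by
              simpa [sub_eq_add_neg] using
                norm_add_le (Fc O p (a + (Real.sqrt v : ℂ) * z) g) (-a)
        _ ≤ R + R := add_le_add (Fc_norm_le hO hp _ _ hR) (hR a ha)
        _ = 2 * R := by ring
    have h0 : (0:ℝ) ≤ ‖Fc O p (a + (Real.sqrt v : ℂ) * z) g - a‖ :=
      norm_nonneg _
    nlinarith
  calc PsiC O p v g ≤ ∑ a ∈ O, p a * ((2 * R) ^ 2 * (gaussC Set.univ).toReal) := by
        apply Finset.sum_le_sum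
        intro a ha
        exact mul_le_mul_of_nonneg_left (key a ha) (hp a ha).le
    _ = (2 * R) ^ 2 * (gaussC Set.univ).toReal := by
        rw [← Finset.sum_mul, hpsum, one_mul]

end bounds

/-- Lemma 7 (behavior of fixed points as the noise vanishes): if `β·ψ(x) < x` for all
`x > 0` and `ψ(x)/x → 0` as `x → 0⁺`, then for every `ε > 0` there is `δ > 0` such that
every fixed point `x = N₀ + β·ψ(x)` with `0 < N₀ < δ` satisfies `N₀ ≤ x ≤ (1+ε)·N₀`. -/
theorem lama_fixed_points_vanishing_noise
    (O : Finset ℂ) (hO : O.Nonempty) (p : ℂ → ℝ)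
    (hp : ∀ a ∈ O, 0 < p a) (hpsum : ∑ a ∈ O, p a = 1)
    (β : ℝ) (hβ : 0 < β)
    (hcont : ContinuousOn (fun v : ℝ => PsiC O p v v) (Set.Ioi 0))
    (hbelow : ∀ x : ℝ, 0 < x → β * PsiC O p x x < x)
    (hratio : Tendsto (fun x : ℝ => PsiC O p x x / x) (𝓝[>] 0) (𝓝 0)) :
    ∀ ε : ℝ, 0 < ε → ∃ δ : ℝ, 0 < δ ∧
      ∀ N₀ : ℝ, 0 < N₀ → N₀ < δ →
        ∀ x : ℝ, 0 < x → x = N₀ + β * PsiC O p x x →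
          N₀ ≤ x ∧ x ≤ (1 + ε) * N₀ := by
  intro ε hε
  have h1ε : (0:ℝ) < 1 + ε := by linarith
  set ψ := fun v : ℝ => PsiC O p v v with hψdef
  set C : ℝ := (2 * O.sup' hO (fun a => ‖a‖)) ^ 2 * (gaussC Set.univ).toReal with hCdef
  have hψC : ∀ x : ℝ, ψ x ≤ C := fun x => PsiC_le hO hp hpsum x x
  have hψ0 : ∀ x : ℝ, 0 ≤ ψ x := fun x => PsiC_nonneg hp x x
  have hC0 : (0:ℝ) ≤ C := le_trans (hψ0 1) (hψC 1)
  -- threshold from the ratio condition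
  set r : ℝ := ε / ((1 + ε) * β) with hrdef
  have hr : 0 < r := div_pos hε (mul_pos h1ε hβ)
  rw [Metric.tendsto_nhdsWithin_nhds] at hratio
  obtain ⟨t, ht, hts⟩ := hratio r hr
  set t' : ℝ := min t 1 with ht'def
  have ht' : 0 < t' := lt_min ht one_pos
  set M : ℝ := 1 + β * C with hMdef
  have hM1 : (1:ℝ) ≤ M := by nlinarith
  have hKne : t' ≤ M := le_trans (min_le_right t 1) hM1
  -- minimum of x - β ψ x on [t', M]
  have hKsub : Set.Icc t' M ⊆ Set.Ioi (0:ℝ) := fun x hx => lt_of_lt_of_le ht' hx.1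
  have gcont : ContinuousOn (fun x : ℝ => x - β * ψ x) (Set.Icc t' M) :=
    continuousOn_id.sub (continuousOn_const.mul (hcont.mono hKsub))
  obtain ⟨x₀, hx₀K, hmin⟩ := isCompact_Icc.exists_isMinOn ⟨t', Set.left_mem_Icc.mpr hKne⟩ gcont
  have hx₀pos : 0 < x₀ := hKsub hx₀K
  set m : ℝ := x₀ - β * ψ x₀ with hmdef
  have hm : 0 < m := sub_pos.mpr (hbelow x₀ hx₀pos)
  refine ⟨min 1 m, lt_min one_pos hm, ?_⟩
  intro N₀ hN₀ hN₀δ x hx hfix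
  have hN₀1 : N₀ ≤ 1 := le_of_lt (lt_of_lt_of_le hN₀δ (min_le_left _ _))
  have hN₀m : N₀ < m := lt_of_lt_of_le hN₀δ (min_le_right _ _)
  have hlow : N₀ ≤ x := by
    have : 0 ≤ β * ψ x := mul_nonneg hβ.le (hψ0 x)
    linarith [hfix]
  refine ⟨hlow, ?_⟩
  have hxM : x ≤ M := by
    have : β * ψ x ≤ β * C := mul_le_mul_of_nonneg_left (hψC x) hβ.le
    rw [hfix, hMdef]; linarith
  have hxt' : x < t' := by
    by_contra hcon
    push_neg at hcon
    have hxK : x ∈ Set.Icc t' M := ⟨hcon, hxM⟩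
    have := hmin hxK
    simp only [Set.mem_setOf_eq] at this
    have hgx : x - β * ψ x = N₀ := by linarith [hfix]
    rw [hgx] at this
    linarith
  -- apply the ratio bound
  have hxt : x < t := lt_of_lt_of_le hxt' (min_le_left t 1)
  have hdist : dist x 0 < t := by rwa [Real.dist_eq, sub_zero, abs_of_pos hx]
  have := hts (Set.mem_Ioi.mpr hx) hdist
  rw [Real.dist_eq, sub_zero] at this
  have hψr : ψ x ≤ r * x := by
    have h2 : ψ x / x ≤ |ψ x / x| := le_abs_self _
    have h3 : ψ x / x < r := lt_of_le_of_lt h2 this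
    calc ψ x = (ψ x / x) * x := by field_simp
      _ ≤ r * x := mul_le_mul_of_nonneg_right h3.le hx.le
  have hβr : β * r * (1 + ε) = ε := by
    rw [hrdef]; field_simp
  have hstep : x ≤ N₀ + β * (r * x) := by
    have h4 : β * ψ x ≤ β * (r * x) := mul_le_mul_of_nonneg_left hψr hβ.le
    have h5 : x = N₀ + β * ψ x := hfix
    linarith
  nlinarith [hstep, hβr, mul_pos hβ hr]
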